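/- Let t < 0. There exists a unique y_t ∈ (0, −π/(2t)·2) with 0 < y_t < −π/t such that f_t(y_t) = −1 and f_t(y) > −1 for all y ∈ [0, y_t); moreover |f_t(y)| ≤ 1 for all y with |y| ≤ y_t, and −1 < f_t(y) < 1 for all y with 0 < |y| < y_t. -/

import Mathlib

/-- For `t < 0`, `f_t(y) := 2y·sin(ty) + cos(ty)`. -/
noncomputable def fMap (t y : ℝ) : ℝ :=
  2 * y * Real.sin (t * y) + Real.cos (t * y)

/-- Auxiliary function: `φ_t(y) = 2y·sin(ty/2) + cos(ty/2)`. -/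
noncomputable def phiMap (t y : ℝ) : ℝ :=
  2 * y * Real.sin (t * y / 2) + Real.cos (t * y / 2)

lemma sin_full (x : ℝ) : Real.sin x = 2 * Real.sin (x / 2) * Real.cos (x / 2) := by
  have h := Real.sin_two_mul (x / 2)
  have h2 : 2 * (x / 2) = x := by ring
  rw [h2] at h
  exact h

lemma cos_full (x : ℝ) : Real.cos x = 2 * Real.cos (x / 2) ^ 2 - 1 := by
  have h := Real.cos_two_mul (x / 2)
  have h2 : 2 * (x / 2) = x := by ring
  rw [h2] at h
  exact h

lemma fMap_add_one (t y : ℝ) :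
    fMap t y + 1 = 2 * Real.cos (t * y / 2) * phiMap t y := by
  rw [fMap, phiMap, sin_full (t * y), cos_full (t * y)]
  ring

lemma fMap_sub_one (t y : ℝ) :
    fMap t y - 1 = 2 * Real.sin (t * y / 2) *
      (2 * y * Real.cos (t * y / 2) - Real.sin (t * y / 2)) := by
  rw [fMap, sin_full (t * y), cos_full (t * y)]
  linear_combination (2 : ℝ) * Real.sin_sq_add_cos_sq (t * y / 2)

lemma fMap_even (t y : ℝ) : fMap t (-y) = fMap t y := by
  simp only [fMap, mul_neg, Real.sin_neg, Real.cos_neg]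
  ring

lemma fMap_abs (t y : ℝ) : fMap t |y| = fMap t y := by
  rcases abs_choice y with h | h
  · rw [h]
  · rw [h, fMap_even]

lemma fMap_zero (t : ℝ) : fMap t 0 = 1 := by simp [fMap]

lemma phiMap_hasDerivAt (t y : ℝ) :
    HasDerivAt (phiMap t)
      ((2 - t / 2) * Real.sin (t * y / 2) + t * y * Real.cos (t * y / 2)) y := by
  have h0 : HasDerivAt (fun y : ℝ => t * y / 2) (t / 2) y := by
    simpa using ((hasDerivAt_id y).const_mul t).div_const 2
  have hs : HasDerivAt (fun y : ℝ => Real.sin (t * y / 2))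
      (Real.cos (t * y / 2) * (t / 2)) y := (Real.hasDerivAt_sin _).comp y h0
  have hc : HasDerivAt (fun y : ℝ => Real.cos (t * y / 2))
      (-Real.sin (t * y / 2) * (t / 2)) y := (Real.hasDerivAt_cos _).comp y h0
  have hm := (((hasDerivAt_id y).const_mul 2).mul hs).add hc
  refine HasDerivAt.congr_deriv (f := phiMap t) hm ?_
  simp only [id_eq]
  ring

lemma phiMap_continuous (t : ℝ) : Continuous (phiMap t) := by
  unfold phiMap; fun_prop

/-- let `t < 0`. There exists a unique `y_t ∈ (0, −π/(2t)·2) = (0, −π/t)`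
such that `f_t(y_t) = −1` and `f_t(y) > −1` for all `y ∈ [0, y_t)`; moreover
`|f_t(y)| ≤ 1` whenever `|y| ≤ y_t`, and `−1 < f_t(y) < 1` whenever `0 < |y| < y_t`. -/
theorem existsUnique_yt (t : ℝ) (ht : t < 0) :
    ∃! yt : ℝ,
      (0 < yt ∧ yt < -Real.pi / (2 * t) * 2 ∧ fMap t yt = -1 ∧
        (∀ y ∈ Set.Ico (0 : ℝ) yt, -1 < fMap t y)) ∧
      (∀ y : ℝ, |y| ≤ yt → |fMap t y| ≤ 1) ∧
      (∀ y : ℝ, 0 < |y| → |y| < yt → -1 < fMap t y ∧ fMap t y < 1) := by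
  have ht' : t ≠ 0 := ne_of_lt ht
  have hπ := Real.pi_pos
  set b : ℝ := -Real.pi / t with hb
  have hbeq : -Real.pi / (2 * t) * 2 = b := by rw [hb]; field_simp
  have hb0 : 0 < b := by
    rw [hb]
    exact div_pos_of_neg_of_neg (by linarith) ht
  -- basic angle facts
  have hang : ∀ y : ℝ, 0 < y → y < b → t * y / 2 ∈ Set.Ioo (-(Real.pi/2)) 0 := by
    intro y hy hyb
    constructor
    · have : t * b < t * y := by
        exact mul_lt_mul_of_neg_left hyb ht
      have htb : t * b = -Real.pi := by rw [hb]; field_simp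
      rw [htb] at this
      linarith
    · have : t * y < 0 := mul_neg_of_neg_of_pos ht hy
      linarith
  have hsin : ∀ y : ℝ, 0 < y → y < b → Real.sin (t * y / 2) < 0 := by
    intro y hy hyb
    obtain ⟨h1, h2⟩ := hang y hy hyb
    exact Real.sin_neg_of_neg_of_neg_pi_lt h2 (by linarith)
  have hcos : ∀ y : ℝ, 0 ≤ y → y < b → 0 < Real.cos (t * y / 2) := by
    intro y hy hyb
    rcases eq_or_lt_of_le hy with h | h
    · simp [← h]
    · obtain ⟨h1, h2⟩ := hang y h hyb
      exact Real.cos_pos_of_mem_Ioo ⟨h1, by linarith⟩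
  -- φ is strictly decreasing on [0, b]
  have hanti : StrictAntiOn (phiMap t) (Set.Icc 0 b) := by
    apply strictAntiOn_of_deriv_neg (convex_Icc 0 b)
      ((phiMap_continuous t).continuousOn)
    intro x hx
    rw [interior_Icc] at hx
    rw [(phiMap_hasDerivAt t x).deriv]
    have hs := hsin x hx.1 hx.2
    have hc := hcos x hx.1.le hx.2
    have h1 : (2 - t / 2) * Real.sin (t * x / 2) < 0 :=
      mul_neg_of_pos_of_neg (by linarith) hs
    have h2 : t * x * Real.cos (t * x / 2) < 0 :=
      mul_neg_of_neg_of_pos (mul_neg_of_neg_of_pos ht hx.1) hc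
    linarith
  -- values at the endpoints
  have hphi0 : phiMap t 0 = 1 := by simp [phiMap]
  have hphib : phiMap t b = -(2 * b) := by
    have htb : t * b / 2 = -(Real.pi / 2) := by rw [hb]; field_simp
    rw [phiMap, htb, Real.sin_neg, Real.cos_neg, Real.sin_pi_div_two,
      Real.cos_pi_div_two]
    ring
  -- existence of the root of φ
  obtain ⟨yt, hytmem, hyt0⟩ : ∃ yt ∈ Set.Icc (0:ℝ) b, phiMap t yt = 0 := by
    have := intermediate_value_Icc' hb0.le ((phiMap_continuous t).continuousOn)
    have h0 : (0:ℝ) ∈ Set.Icc (phiMap t b) (phiMap t 0) := by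
      rw [hphi0, hphib]
      constructor <;> linarith
    obtain ⟨yt, hmem, heq⟩ := this h0
    exact ⟨yt, hmem, heq⟩
  have hytpos : 0 < yt := by
    rcases eq_or_lt_of_le hytmem.1 with h | h
    · exfalso; rw [← h, hphi0] at hyt0; norm_num at hyt0
    · exact h
  have hytb : yt < b := by
    rcases eq_or_lt_of_le hytmem.2 with h | h
    · exfalso; rw [h, hphib] at hyt0; linarith
    · exact h
  -- φ > 0 on [0, yt)
  have hphipos : ∀ y : ℝ, 0 ≤ y → y < yt → 0 < phiMap t y := by
    intro y hy hylt
    have := hanti ⟨hy, by linarith⟩ hytmem hylt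
    rw [hyt0] at this
    exact this
  -- f yt = -1
  have hfyt : fMap t yt = -1 := by
    have := fMap_add_one t yt
    rw [hyt0] at this
    linarith
  -- f > -1 on [0, yt)
  have hfgt : ∀ y : ℝ, 0 ≤ y → y < yt → -1 < fMap t y := by
    intro y hy hylt
    have h1 := fMap_add_one t y
    have h2 : 0 < 2 * Real.cos (t * y / 2) * phiMap t y :=
      mul_pos (by linarith [hcos y hy (by linarith)]) (hphipos y hy hylt)
    linarith
  -- f < 1 on (0, b)
  have hflt : ∀ y : ℝ, 0 < y → y < b → fMap t y < 1 := by
    intro y hy hyb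
    have hs := hsin y hy hyb
    have hc := hcos y hy.le hyb
    have h1 := fMap_sub_one t y
    have h2 : 0 < 2 * y * Real.cos (t * y / 2) - Real.sin (t * y / 2) := by
      have : 0 < 2 * y * Real.cos (t * y / 2) := by positivity
      linarith
    have h3 : 2 * Real.sin (t * y / 2) *
        (2 * y * Real.cos (t * y / 2) - Real.sin (t * y / 2)) < 0 :=
      mul_neg_of_neg_of_pos (by linarith) h2
    linarith
  refine ⟨yt, ⟨⟨hytpos, by rw [hbeq]; exact hytb, hfyt, fun y hy => hfgt y hy.1 hy.2⟩,
    ?_, ?_⟩, ?_⟩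
  · -- |f y| ≤ 1 for |y| ≤ yt
    intro y hy
    rw [← fMap_abs]
    set z := |y| with hz
    have hz0 : 0 ≤ z := abs_nonneg y
    rw [abs_le]
    rcases eq_or_lt_of_le hy with h | h
    · rw [h, hfyt]; norm_num
    · rcases eq_or_lt_of_le hz0 with h0 | h0
      · rw [← h0, fMap_zero]; norm_num
      · exact ⟨(hfgt z hz0 h).le, (hflt z h0 (by linarith)).le⟩
  · -- strict bounds for 0 < |y| < yt
    intro y hy hylt
    rw [← fMap_abs]
    exact ⟨hfgt |y| (abs_nonneg y) hylt, hflt |y| hy (by linarith)⟩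
  · -- uniqueness
    rintro y' ⟨⟨hy'pos, hy'b, hfy', hy'gt⟩, -, -⟩
    by_contra hne
    rcases lt_or_gt_of_ne hne with h | h
    · have := hfgt y' hy'pos.le h
      rw [hfy'] at this
      exact lt_irrefl _ this
    · have := hy'gt yt ⟨hytpos.le, h⟩
      rw [hfyt] at this
      exact lt_irrefl _ this
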